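/- arXiv:1002.1161 — 3 statements merged into one kernel-verified Lean document; each statement's English description precedes it below -/
import Mathlib

section
/- Let b > 0, β > 0, σ > β² − b, and let k be a positive integer, and let m_{σ,k}(ζ) = ((ζ² + b)/(ζ² + b + σ))^k on the strip S_β = {ζ ∈ ℂ : |Im ζ| < β}. Then for every nonnegative integer j there exists a constant C > 0 such that the j-th complex derivative of m_{σ,k} satisfies |m_{σ,k}^{(j)}(ζ)| ≤ C (1 + |ζ|)^{-j} for all ζ ∈ S_β. -/
/-!
The poles `±i√(b + σ)` of `m_{σ,k}` lie at distance at least `√(b + σ) - β > 0` from `S_β`, and a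
point at distance `≥ d > 0` from a fixed `p` is at distance `≳ 1 + |ζ|` from it. Hence for small
`ε` the disc of radius `ε (1 + |ζ|)` around `ζ ∈ S_β` stays a fixed distance away from both poles,
`m_{σ,k}` is bounded on it uniformly in `ζ`, and Cauchy's estimate on that disc yields the factor
`(ε (1 + |ζ|))^{-j}`.
-/

open Complex Metric Nat

lemma norm_iteratedDeriv_le_div_one_add_norm_pow {F : Type*} [NormedAddCommGroup F]
    [NormedSpace ℂ F] [CompleteSpace F] {f : ℂ → F} {ζ : ℂ} {ε M : ℝ} (hε : 0 < ε)
    (hf : DifferentiableOn ℂ f (closedBall ζ (ε * (1 + ‖ζ‖))))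
    (hM : ∀ w ∈ closedBall ζ (ε * (1 + ‖ζ‖)), ‖f w‖ ≤ M) (j : ℕ) :
    ‖iteratedDeriv j f ζ‖ ≤ j ! * M / ε ^ j / (1 + ‖ζ‖) ^ j := by
  have hR : 0 < ε * (1 + ‖ζ‖) := by positivity
  calc ‖iteratedDeriv j f ζ‖ ≤ j ! * M / (ε * (1 + ‖ζ‖)) ^ j :=
        norm_iteratedDeriv_le_of_forall_mem_sphere_norm_le j hR (hf.diffContOnCl_ball subset_rfl)
          fun w hw ↦ hM w (sphere_subset_closedBall hw)
    _ = j ! * M / ε ^ j / (1 + ‖ζ‖) ^ j := by rw [mul_pow, div_div]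

lemma one_add_norm_le_mul_norm_sub {E : Type*} [SeminormedAddGroup E] {z p : E} {d : ℝ}
    (hd : 0 < d) (h : d ≤ ‖z - p‖) : 1 + ‖z‖ ≤ (1 + (1 + ‖p‖) / d) * ‖z - p‖ := by
  have hp : 1 + ‖p‖ ≤ (1 + ‖p‖) / d * ‖z - p‖ := by
    rw [div_mul_eq_mul_div, le_div_iff₀ hd]
    gcongr
  linarith [norm_le_norm_sub_add z p]

lemma le_norm_sub_of_mem_closedBall {E : Type*} [SeminormedAddCommGroup E] {ζ w p : E} {r : ℝ}
    (h : 2 * r ≤ ‖ζ - p‖) (hw : w ∈ closedBall ζ r) : r ≤ ‖w - p‖ := by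
  rw [mem_closedBall_iff_norm'] at hw
  linarith [norm_sub_le_norm_sub_add_norm_sub ζ w p]

lemma sub_lt_norm_sub_of_abs_im_lt {z p : ℂ} {β : ℝ} (hz : |z.im| < β) :
    |p.im| - β < ‖z - p‖ :=
  calc |p.im| - β < |p.im| - |z.im| := by linarith
    _ ≤ |p.im - z.im| := abs_sub_abs_le_abs_sub _ _
    _ = |(z - p).im| := by rw [sub_im, abs_sub_comm]
    _ ≤ ‖z - p‖ := abs_im_le_norm _

lemma mul_one_add_norm_le_norm_sub_of_abs_im_lt {z p : ℂ} {β : ℝ} (hβ : β < |p.im|)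
    (hz : |z.im| < β) : (1 + (1 + ‖p‖) / (|p.im| - β))⁻¹ * (1 + ‖z‖) ≤ ‖z - p‖ := by
  have hd : 0 < |p.im| - β := sub_pos.mpr hβ
  rw [inv_mul_le_iff₀ (by positivity)]
  exact one_add_norm_le_mul_norm_sub hd (sub_lt_norm_sub_of_abs_im_lt hz).le

lemma norm_sq_add_sq_eq (w : ℂ) (s : ℝ) :
    ‖w ^ 2 + (s : ℂ) ^ 2‖ = ‖w - s * I‖ * ‖w + s * I‖ := by
  rw [← norm_mul]
  congr 1
  linear_combination (s : ℂ) ^ 2 * I_sq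

lemma norm_div_add_le {a c : ℂ} {δ : ℝ} (hδ : 0 < δ) (h : δ ≤ ‖a + c‖) :
    ‖a / (a + c)‖ ≤ 1 + ‖c‖ / δ := by
  have hac : a + c ≠ 0 := norm_pos_iff.mp (hδ.trans_le h)
  calc ‖a / (a + c)‖ = ‖1 - c / (a + c)‖ := by
        congr 1
        field_simp
        ring
    _ ≤ 1 + ‖c‖ / ‖a + c‖ := by simpa only [norm_one, norm_div] using norm_sub_le 1 (c / (a + c))
    _ ≤ 1 + ‖c‖ / δ := by gcongr

lemma exists_sq_le_norm_sq_add_sq_of_mem_closedBall {β s : ℝ} (hβs : β < s) :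
    ∃ ε > 0, ∀ ζ : ℂ, |ζ.im| < β → ∀ w ∈ closedBall ζ (ε * (1 + ‖ζ‖)),
      ε ^ 2 ≤ ‖w ^ 2 + (s : ℂ) ^ 2‖ := by
  have hβs' : β < |s| := hβs.trans_le (le_abs_self s)
  set κ := (1 + (1 + |s|) / (|s| - β))⁻¹
  have hκ : 0 < κ := by have := sub_pos.mpr hβs'; positivity
  refine ⟨κ / 2, by positivity, fun ζ hζ w hw ↦ ?_⟩
  have hfar : ∀ p : ℂ, ‖p‖ = |s| → |p.im| = |s| → κ / 2 ≤ ‖w - p‖ := by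
    intro p hp_norm hp_im
    have hζp := mul_one_add_norm_le_norm_sub_of_abs_im_lt (hp_im ▸ hβs') hζ
    rw [hp_norm, hp_im] at hζp
    calc κ / 2 ≤ κ / 2 * (1 + ‖ζ‖) := le_mul_of_one_le_right (by positivity) (by simp)
      _ ≤ ‖w - p‖ := le_norm_sub_of_mem_closedBall (by linarith) hw
  rw [norm_sq_add_sq_eq, sq, ← sub_neg_eq_add w]
  exact mul_le_mul (hfar _ (by simp) (by simp)) (hfar _ (by simp) (by simp)) (by positivity)
    (norm_nonneg _)

theorem stmt_1_general (b β σ : ℝ) (hσ : β ^ 2 - b < σ)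
    (k : ℕ) (j : ℕ) :
    ∃ C : ℝ, 0 < C ∧ ∀ ζ : ℂ, |ζ.im| < β →
      ‖iteratedDeriv j
          (fun z : ℂ => ((z ^ 2 + (b : ℂ)) / (z ^ 2 + (b : ℂ) + (σ : ℂ))) ^ k) ζ‖
        ≤ C / (1 + ‖ζ‖) ^ j := by
  have hs : ((√(b + σ) : ℝ) : ℂ) ^ 2 = b + σ := by
    rw [← ofReal_pow, Real.sq_sqrt (by linarith [sq_nonneg β]), ofReal_add]
  have hβs : β < √(b + σ) := Real.lt_sqrt_of_sq_lt (by linarith)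
  obtain ⟨ε, hε, hball⟩ := exists_sq_le_norm_sq_add_sq_of_mem_closedBall hβs
  set M := (1 + ‖(σ : ℂ)‖ / ε ^ 2) ^ k
  refine ⟨j ! * M / ε ^ j, by positivity, fun ζ hζ ↦ ?_⟩
  have hden : ∀ w ∈ closedBall ζ (ε * (1 + ‖ζ‖)), ε ^ 2 ≤ ‖w ^ 2 + b + σ‖ := by
    intro w hw
    rw [add_assoc, ← hs]
    exact hball ζ hζ w hw
  refine norm_iteratedDeriv_le_div_one_add_norm_pow hε ?_ (fun w hw ↦ ?_) j
  · intro w hw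
    have hw0 : w ^ 2 + b + σ ≠ 0 := norm_pos_iff.mp ((pow_pos hε 2).trans_le (hden w hw))
    fun_prop (disch := exact hw0)
  · rw [norm_pow]
    exact pow_le_pow_left₀ (norm_nonneg _) (norm_div_add_le (by positivity) (hden w hw)) k

/-- Mihlin–Hörmander-type derivative estimates for the spectral multiplier
`m_{σ,k}(ζ) = ((ζ² + b)/(ζ² + b + σ))^k` on the strip `S_β = {ζ : |Im ζ| < β}`:
for every `j` there is `C > 0` with `|m_{σ,k}^{(j)}(ζ)| ≤ C (1 + |ζ|)^{-j}` on `S_β`. -/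
theorem stmt_1 (b β σ : ℝ) (hb : 0 < b) (hβ : 0 < β) (hσ : β ^ 2 - b < σ)
    (k : ℕ) (hk : 0 < k) (j : ℕ) :
    ∃ C : ℝ, 0 < C ∧ ∀ ζ : ℂ, |ζ.im| < β →
      ‖iteratedDeriv j
          (fun z : ℂ => ((z ^ 2 + (b : ℂ)) / (z ^ 2 + (b : ℂ) + (σ : ℂ))) ^ k) ζ‖
        ≤ C / (1 + ‖ζ‖) ^ j :=
  stmt_1_general b β σ hσ k j
end

section
/- For every positive integer k there exists a real polynomial P of degree k + 1 with P(0) = 0 such that for every function f : ℝ → ℂ that is (k+1) times continuously differentiable and such that, for each ℓ ∈ {0, 1, …, k+1}, the function t ↦ t^ℓ f^{(ℓ)}(t) is Lebesgue integrable on ℝ and tends to 0 as |t| → ∞, and for every real v ≠ 0, one has ∫_ℝ f(t) cos(vt) dt = ∫_ℝ (P(𝒪)f)(t) 𝒥_{k+1/2}(tv) dt. -/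
/-!
Poisson's integral `G_j(s) = ∫_{-1}^{1} (1 - x²)^j cos (s x) dx`, suitably normalised, is a smooth
bounded function `B_j` that agrees with `((1/s) d/ds)^j (sin s / s)` off `s = 0`. Integrating by
parts in `x` gives `s B_0(s) = sin s`, `B_j' = s B_{j+1}` and
`(s B_{j+1}(s))' = -(B_j(s) + (2j+2) B_{j+1}(s))`.

Write `S_j = Q_j(𝒪) f`. Integrating `S_j` by parts in `t` against `t B_{j+1}(t v)`, whose
`t`-derivative is `-(B_j + (2j+2) B_{j+1})(t v)`, and using `t (Q(𝒪) f)' = (X (Q + Q'))(𝒪) f`,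
turns `∫ S_j(t) B_j(t v) dt` into `∫ S_{j+1}(t) B_{j+1}(t v) dt` for
`Q_{j+1} = X (Q_j + Q_j') - (2j+2) Q_j`. The same integration by parts against `sin (t v) / v`
starts the induction with `Q_0 = -X`, and `P` is `Q_k` rescaled by the constant in `𝒥_{k+1/2}`.
-/

open MeasureTheory Filter Polynomial Set
open scoped Nat

/-- The iterates of the operator `(1/s) d/ds` applied to `sin s / s`. -/
noncomputable def besselIter : ℕ → (ℝ → ℝ)
  | 0 => fun s => Real.sin s / s
  | (k + 1) => fun s => (1 / s) * deriv (besselIter k) s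

/-- The modified Bessel-type function
`𝒥_{k+1/2}(s) = √(2/π) (−1)^k ((1/s) d/ds)^k (sin s / s)`,
which equals `J_{k+1/2}(s)/s^{k+1/2}` for `s > 0`. -/
noncomputable def Jmod (k : ℕ) (s : ℝ) : ℝ :=
  Real.sqrt (2 / Real.pi) * (-1 : ℝ) ^ k * besselIter k s

/-- For a real polynomial `P(x) = Σ aₘ xᵐ` and `f : ℝ → ℂ`, the function
`(P(𝒪)f)(t) = Σ aₘ tᵐ f^{(m)}(t)`, i.e. `xᵐ` is replaced by `𝒪^m = tᵐ Dᵐ`. -/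
noncomputable def PopC (P : Polynomial ℝ) (f : ℝ → ℂ) (t : ℝ) : ℂ :=
  ∑ m ∈ Finset.range (P.natDegree + 1),
    (P.coeff m : ℂ) * (t : ℂ) ^ m * iteratedDeriv m f t

theorem hasDerivAt_intervalIntegral_mul_comp_mul {p k k' : ℝ → ℝ} {a b : ℝ} (hp : Continuous p)
    (hk : ∀ y, HasDerivAt k (k' y) y) (hk' : Continuous k') (hk'_le : ∀ y, |k' y| ≤ 1) (s : ℝ) :
    HasDerivAt (fun s => ∫ x in a..b, p x * k (s * x)) (∫ x in a..b, p x * x * k' (s * x)) s := by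
  have hkc : Continuous k := continuous_iff_continuousAt.2 fun y => (hk y).continuousAt
  refine (intervalIntegral.hasDerivAt_integral_of_dominated_loc_of_deriv_le
    (bound := fun x => |p x * x|) (F' := fun s x => p x * x * k' (s * x))
    univ_mem ?_ ?_ ?_ ?_ ?_ ?_).2
  · exact .of_forall fun s => (by fun_prop : Continuous _).aestronglyMeasurable
  · exact (by fun_prop : Continuous _).intervalIntegrable _ _
  · exact (by fun_prop : Continuous _).aestronglyMeasurable
  · refine .of_forall fun x _ s _ => ?_
    rw [Real.norm_eq_abs, abs_mul (p x * x)]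
    exact mul_le_of_le_one_right (abs_nonneg _) (hk'_le _)
  · exact (by fun_prop : Continuous _).intervalIntegrable _ _
  · refine .of_forall fun x _ s _ => ?_
    simpa [mul_assoc, mul_comm x] using
      ((hk (s * x)).comp s (hasDerivAt_mul_const x)).const_mul (p x)

theorem abs_intervalIntegral_le_two {g : ℝ → ℝ} (hg : ∀ x ∈ Icc (-1 : ℝ) 1, |g x| ≤ 1) :
    |∫ x in (-1)..1, g x| ≤ 2 := by
  have h := intervalIntegral.norm_integral_le_of_norm_le_const (a := -1) (b := 1) (C := 1)
    (f := g) fun x hx => hg x (Ioc_subset_Icc_self (by simpa using hx))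
  norm_num at h
  exact h

theorem integrable_mul_ofReal_comp_mul {S : ℝ → ℂ} {K : ℝ → ℝ} {C : ℝ} (hS : Integrable S)
    (hK : Continuous K) (hK_le : ∀ s, |K s| ≤ C) (v : ℝ) :
    Integrable fun t => S t * (K (t * v) : ℂ) := by
  refine (hS.bdd_mul (c := C)
    (by fun_prop : Continuous fun t => (K (t * v) : ℂ)).aestronglyMeasurable
    (.of_forall fun t => by simpa using hK_le (t * v))).congr (.of_forall fun t => mul_comm _ _)

/-- Integration by parts against `t ↦ t * K (t * v)`, whose derivative is `φ' (t * v)`. -/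
theorem integral_mul_comp_mul_eq_neg_integral {u u' : ℝ → ℂ} {K φ' : ℝ → ℝ} {C v : ℝ}
    (hv : v ≠ 0) (hu : ∀ t, HasDerivAt u (u' t) t) (hu_int : Integrable u)
    (hu'_int : Integrable fun t : ℝ => (t : ℂ) * u' t) (hK : Continuous K)
    (hφ : ∀ s, HasDerivAt (fun s => s * K s) (φ' s) s) (hφ' : Continuous φ')
    (hK_le : ∀ s, |K s| ≤ C) (hφ_le : ∀ s, |s * K s| ≤ C) (hφ'_le : ∀ s, |φ' s| ≤ C) :
    ∫ t : ℝ, u t * φ' (t * v) = -∫ t : ℝ, (t : ℂ) * u' t * K (t * v) := by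
  have hψ (t : ℝ) :
      HasDerivAt (fun t : ℝ => (((t * v) * K (t * v) / v : ℝ) : ℂ)) (φ' (t * v)) t := by
    have h := (((hφ (t * v)).comp t (hasDerivAt_mul_const v)).div_const v).ofReal_comp
    rwa [mul_div_cancel_right₀ _ hv] at h
  have hψ_eq (t : ℝ) : ((t * v) * K (t * v) / v : ℝ) = t * K (t * v) := by
    rw [mul_right_comm, mul_div_cancel_right₀ _ hv]
  have h := integral_mul_deriv_eq_deriv_mul_of_integrable (fun t _ => hu t) (fun t _ => hψ t)
    (integrable_mul_ofReal_comp_mul hu_int hφ' hφ'_le v)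
    ?_ ?_
  · simp only [hψ_eq, Complex.ofReal_mul] at h
    rw [h]
    congr 2 with t
    ring
  · refine (integrable_mul_ofReal_comp_mul hu'_int hK hK_le v).congr (.of_forall fun t => ?_)
    simp only [Pi.mul_apply, hψ_eq, Complex.ofReal_mul]
    ring
  · refine integrable_mul_ofReal_comp_mul (K := fun s => s * K s / v) (C := C / |v|) hu_int
      (by fun_prop) (fun s => ?_) v
    rw [abs_div]
    gcongr
    exact hφ_le s

theorem mul_integral_one_sub_sq_pow_succ_mul_cos (j : ℕ) (s : ℝ) :
    s * ∫ x in (-1)..1, (1 - x ^ 2) ^ (j + 1) * Real.cos (s * x) =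
      (2 * j + 2) * ∫ x in (-1)..1, x * (1 - x ^ 2) ^ j * Real.sin (s * x) := by
  have hu (x : ℝ) : HasDerivAt (fun x => (1 - x ^ 2) ^ (j + 1))
      (-((2 * j + 2) * (x * (1 - x ^ 2) ^ j))) x :=
    (((hasDerivAt_pow 2 x).const_sub 1).fun_pow (j + 1)).congr_deriv (by push_cast; ring)
  have hv (x : ℝ) : HasDerivAt (fun x => Real.sin (s * x)) (s * Real.cos (s * x)) x := by
    simpa [mul_comm] using ((hasDerivAt_id x).const_mul s).sin
  have h := intervalIntegral.integral_mul_deriv_eq_deriv_mul (a := -1) (b := 1)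
    (fun x _ => hu x) (fun x _ => hv x)
    ((by fun_prop : Continuous _).intervalIntegrable _ _)
    ((by fun_prop : Continuous _).intervalIntegrable _ _)
  norm_num at h
  rw [← intervalIntegral.integral_const_mul, ← intervalIntegral.integral_const_mul]
  convert h using 3 with x x <;> ring

theorem abs_one_sub_sq_pow_le_one {x : ℝ} (hx : x ∈ Icc (-1) 1) (j : ℕ) :
    |(1 - x ^ 2) ^ j| ≤ 1 := by
  have hx2 : x ^ 2 ≤ 1 := by nlinarith [hx.1, hx.2]
  rw [abs_pow]
  exact pow_le_one₀ (abs_nonneg _) (abs_le.2 ⟨by nlinarith [sq_nonneg x], by nlinarith⟩)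

noncomputable def besselWeight (j : ℕ) : ℝ := (-1) ^ j / (2 ^ (j + 1) * j !)

/-- Poisson's integral for `J_{j+1/2}(s) / s^{j+1/2}`, normalised to agree with `besselIter j`
off `s = 0`; unlike `besselIter j` it is smooth at `0`. -/
noncomputable def besselKernel (j : ℕ) (s : ℝ) : ℝ :=
  besselWeight j * ∫ x in (-1)..1, (1 - x ^ 2) ^ j * Real.cos (s * x)

theorem besselWeight_succ (j : ℕ) : (2 * j + 2) * besselWeight (j + 1) = -besselWeight j := by
  rw [besselWeight, besselWeight, Nat.factorial_succ]
  push_cast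
  field_simp
  ring

theorem abs_besselWeight_le (j : ℕ) : |besselWeight j| ≤ 1 / 2 := by
  have h2 : (2 : ℝ) ≤ 2 ^ (j + 1) := le_self_pow₀ one_le_two (Nat.succ_ne_zero j)
  have hfac : (1 : ℝ) ≤ j ! := by exact_mod_cast Nat.factorial_pos j
  rw [besselWeight, abs_div, abs_pow, abs_neg, abs_one, one_pow, abs_of_pos (by positivity)]
  gcongr
  nlinarith

theorem mul_besselKernel_succ (j : ℕ) (s : ℝ) :
    s * besselKernel (j + 1) s =
      -(besselWeight j * ∫ x in (-1)..1, x * (1 - x ^ 2) ^ j * Real.sin (s * x)) := by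
  rw [besselKernel, mul_left_comm, mul_integral_one_sub_sq_pow_succ_mul_cos, ← mul_assoc,
    mul_comm (besselWeight _), besselWeight_succ, neg_mul]

theorem hasDerivAt_besselKernel (j : ℕ) (s : ℝ) :
    HasDerivAt (besselKernel j) (s * besselKernel (j + 1) s) s := by
  have h := (hasDerivAt_intervalIntegral_mul_comp_mul (a := -1) (b := 1)
    (p := fun x => (1 - x ^ 2) ^ j) (by fun_prop) Real.hasDerivAt_cos (by fun_prop)
    (fun y => by simpa using Real.abs_sin_le_one y) s).const_mul (besselWeight j)
  refine h.congr_deriv ?_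
  rw [mul_besselKernel_succ, ← mul_neg, ← intervalIntegral.integral_neg]
  exact congrArg _ (intervalIntegral.integral_congr fun x _ => by ring)

@[fun_prop]
theorem continuous_besselKernel (j : ℕ) : Continuous (besselKernel j) :=
  continuous_iff_continuousAt.2 fun s => (hasDerivAt_besselKernel j s).continuousAt

theorem hasDerivAt_mul_besselKernel_succ (j : ℕ) (s : ℝ) :
    HasDerivAt (fun s => s * besselKernel (j + 1) s)
      (-(besselKernel j s + (2 * j + 2) * besselKernel (j + 1) s)) s := by
  have h := ((hasDerivAt_intervalIntegral_mul_comp_mul (a := -1) (b := 1)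
    (p := fun x => x * (1 - x ^ 2) ^ j) (by fun_prop) Real.hasDerivAt_sin (by fun_prop)
    (fun y => Real.abs_cos_le_one y) s).const_mul (besselWeight j)).fun_neg
  have hsplit : ∫ x in (-1)..1, x * (1 - x ^ 2) ^ j * x * Real.cos (s * x) =
      (∫ x in (-1)..1, (1 - x ^ 2) ^ j * Real.cos (s * x)) -
        ∫ x in (-1)..1, (1 - x ^ 2) ^ (j + 1) * Real.cos (s * x) := by
    rw [← intervalIntegral.integral_sub ((by fun_prop : Continuous _).intervalIntegrable _ _)
      ((by fun_prop : Continuous _).intervalIntegrable _ _)]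
    exact intervalIntegral.integral_congr fun x _ => by ring
  rw [funext (mul_besselKernel_succ j)]
  refine h.congr_deriv ?_
  rw [hsplit, besselKernel, besselKernel, ← mul_assoc _ (besselWeight _), besselWeight_succ]
  ring

theorem mul_besselKernel_zero (s : ℝ) : s * besselKernel 0 s = Real.sin s := by
  rcases eq_or_ne s 0 with rfl | hs
  · simp
  simp only [besselKernel, besselWeight, pow_zero, one_mul, intervalIntegral.integral_comp_mul_left
    (fun x => Real.cos x) hs, integral_cos, mul_neg, mul_one, Real.sin_neg, smul_eq_mul]
  field_simp
  ring

theorem abs_besselKernel_le_one (j : ℕ) (s : ℝ) : |besselKernel j s| ≤ 1 := by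
  have h := abs_intervalIntegral_le_two (g := fun x => (1 - x ^ 2) ^ j * Real.cos (s * x))
    fun x hx => by
      rw [abs_mul]
      exact mul_le_one₀ (abs_one_sub_sq_pow_le_one hx j) (abs_nonneg _) (Real.abs_cos_le_one _)
  rw [besselKernel, abs_mul]
  nlinarith [abs_besselWeight_le j, abs_nonneg (besselWeight j)]

theorem abs_mul_besselKernel_succ_le_one (j : ℕ) (s : ℝ) : |s * besselKernel (j + 1) s| ≤ 1 := by
  have h := abs_intervalIntegral_le_two (g := fun x => x * (1 - x ^ 2) ^ j * Real.sin (s * x))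
    fun x hx => by
      rw [abs_mul, abs_mul]
      refine mul_le_one₀ (mul_le_one₀ (abs_le.2 hx) (abs_nonneg _) (abs_one_sub_sq_pow_le_one hx j))
        (abs_nonneg _) (Real.abs_sin_le_one _)
  rw [mul_besselKernel_succ, abs_neg, abs_mul]
  nlinarith [abs_besselWeight_le j, abs_nonneg (besselWeight j)]

theorem abs_besselKernel_add_mul_succ_le (j : ℕ) (s : ℝ) :
    |besselKernel j s + (2 * j + 2) * besselKernel (j + 1) s| ≤ 2 * j + 3 := by
  refine (abs_add_le _ _).trans ?_
  rw [abs_mul, abs_of_nonneg (by positivity : (0 : ℝ) ≤ 2 * j + 2)]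
  nlinarith [abs_besselKernel_le_one j s, abs_besselKernel_le_one (j + 1) s]

theorem besselIter_eq_besselKernel (j : ℕ) {s : ℝ} (hs : s ≠ 0) :
    besselIter j s = besselKernel j s := by
  induction j generalizing s with
  | zero =>
    simp only [besselIter]
    rw [div_eq_iff hs, mul_comm, mul_besselKernel_zero]
  | succ j ih =>
    have hev : besselIter j =ᶠ[nhds s] besselKernel j :=
      eventually_ne_nhds hs |>.mono fun u hu => ih hu
    simp only [besselIter]
    rw [hev.deriv_eq, (hasDerivAt_besselKernel j s).deriv]
    field_simp

section EulerOperator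

variable {P Q : ℝ[X]} {f : ℝ → ℂ} {t : ℝ} {n : ℕ}

theorem PopC_eq_sum_range (hn : P.natDegree < n) :
    PopC P f t = ∑ m ∈ Finset.range n, (P.coeff m : ℂ) * (t : ℂ) ^ m * iteratedDeriv m f t := by
  let g (m : ℕ) (a : ℝ) : ℂ := a * (t : ℂ) ^ m * iteratedDeriv m f t
  have h0 (m : ℕ) : g m 0 = 0 := by simp [g]
  exact (sum_over_range P h0).symm.trans (sum_over_range' P h0 n hn)

theorem PopC_add : PopC (P + Q) f t = PopC P f t + PopC Q f t := by
  have hn := Nat.lt_succ_self (max P.natDegree Q.natDegree)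
  rw [PopC_eq_sum_range ((natDegree_add_le P Q).trans_lt hn),
    PopC_eq_sum_range ((le_max_left _ _).trans_lt hn),
    PopC_eq_sum_range ((le_max_right _ _).trans_lt hn), ← Finset.sum_add_distrib]
  simp only [coeff_add, Complex.ofReal_add, add_mul]

theorem PopC_C_mul (c : ℝ) : PopC (C c * P) f t = c * PopC P f t := by
  rw [PopC_eq_sum_range ((natDegree_C_mul_le c P).trans_lt (Nat.lt_succ_self _)), PopC,
    Finset.mul_sum]
  simp only [coeff_C_mul, Complex.ofReal_mul, mul_assoc]

theorem PopC_X_mul : PopC (X * P) f t = t * PopC P (deriv f) t := by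
  have hn : (X * P).natDegree < P.natDegree + 2 := by
    have := natDegree_mul_le (p := X) (q := P)
    have := natDegree_X_le (R := ℝ)
    omega
  rw [PopC_eq_sum_range hn, Finset.sum_range_succ', PopC, Finset.mul_sum]
  simp only [coeff_X_mul, coeff_X_mul_zero, Complex.ofReal_zero, zero_mul, add_zero,
    iteratedDeriv_succ', pow_succ]
  exact Finset.sum_congr rfl fun m _ => by ring

theorem PopC_derivative_eq_sum_range (hn : P.natDegree < n) :
    PopC (derivative P) (deriv f) t =
      ∑ m ∈ Finset.range n, (P.coeff m : ℂ) * (m * (t : ℂ) ^ (m - 1)) * iteratedDeriv m f t := by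
  obtain ⟨n, rfl⟩ : ∃ n', n = n' + 1 := ⟨n - 1, by omega⟩
  rw [PopC_eq_sum_range ((natDegree_derivative_le P).trans_lt (by omega : _ < n + 1)),
    Finset.sum_range_succ, Finset.sum_range_succ', coeff_derivative,
    coeff_eq_zero_of_natDegree_lt hn]
  simp only [coeff_derivative, ← iteratedDeriv_succ']
  push_cast
  simp only [zero_mul, add_zero, mul_zero]
  exact Finset.sum_congr rfl fun m _ => by ring

theorem hasDerivAt_PopC (hf : ContDiff ℝ n f) (hn : P.natDegree < n) :
    HasDerivAt (PopC P f) (PopC (P + derivative P) (deriv f) t) t := by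
  have hterm (m : ℕ) (hm : m ∈ Finset.range n) : HasDerivAt
      (fun t : ℝ => (P.coeff m : ℂ) * (t : ℂ) ^ m * iteratedDeriv m f t)
      ((P.coeff m : ℂ) * (t : ℂ) ^ m * iteratedDeriv (m + 1) f t +
        (P.coeff m : ℂ) * (m * (t : ℂ) ^ (m - 1)) * iteratedDeriv m f t) t := by
    have hd : HasDerivAt (iteratedDeriv m f) (iteratedDeriv (m + 1) f t) t := by
      rw [iteratedDeriv_succ]
      exact ((hf.differentiable_iteratedDeriv m (by exact_mod_cast Finset.mem_range.1 hm))
        t).hasDerivAt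
    have h := (((hasDerivAt_pow m (t : ℂ)).comp_ofReal).fun_mul hd).const_mul (P.coeff m : ℂ)
    simp only [← mul_assoc] at h
    exact h.congr_deriv (by ring)
  rw [show PopC P f = _ from funext fun t => PopC_eq_sum_range hn]
  refine (HasDerivAt.fun_sum hterm).congr_deriv ?_
  rw [Finset.sum_add_distrib, PopC_add, PopC_eq_sum_range hn, PopC_derivative_eq_sum_range hn]
  simp only [iteratedDeriv_succ']

theorem integrable_PopC
    (hint : ∀ ℓ ≤ n, Integrable fun t : ℝ => (t : ℂ) ^ ℓ * iteratedDeriv ℓ f t)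
    (hP : P.natDegree ≤ n) : Integrable (PopC P f) := by
  rw [show PopC P f = _ from funext fun t => PopC_eq_sum_range (Nat.lt_succ_of_le hP)]
  refine integrable_finsetSum _ fun m hm => ?_
  simpa only [mul_assoc] using
    (hint m (Nat.lt_succ_iff.1 (Finset.mem_range.1 hm))).const_mul (P.coeff m : ℂ)

end EulerOperator

/-- Chosen so that `(besselOpPoly (j + 1))(𝒪) f = t (Q(𝒪) f)' - (2j+2) Q(𝒪) f` for
`Q = besselOpPoly j`. -/
noncomputable def besselOpPoly : ℕ → ℝ[X]
  | 0 => -X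
  | j + 1 =>
    X * (besselOpPoly j + derivative (besselOpPoly j)) - C (2 * (j : ℝ) + 2) * besselOpPoly j

theorem natDegree_besselOpPoly_le (j : ℕ) : (besselOpPoly j).natDegree ≤ j + 1 := by
  induction j with
  | zero => simp [besselOpPoly]
  | succ j ih =>
    rw [besselOpPoly]
    refine (natDegree_sub_le _ _).trans (max_le ?_ ((natDegree_C_mul_le _ _).trans (by omega)))
    refine (natDegree_mul_le).trans ?_
    have := natDegree_X_le (R := ℝ)
    have := (natDegree_add_le (besselOpPoly j) (derivative (besselOpPoly j))).trans
      (max_le ih ((natDegree_derivative_le _).trans (by omega)))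
    omega

theorem coeff_besselOpPoly_succ (j : ℕ) : (besselOpPoly j).coeff (j + 1) = -1 := by
  induction j with
  | zero => simp [besselOpPoly]
  | succ j ih =>
    have hzero : (besselOpPoly j).coeff (j + 2) = 0 :=
      coeff_eq_zero_of_natDegree_lt ((natDegree_besselOpPoly_le j).trans_lt (by omega))
    rw [besselOpPoly, coeff_sub, coeff_X_mul, coeff_C_mul, coeff_add, coeff_derivative, ih, hzero]
    ring

theorem natDegree_besselOpPoly (j : ℕ) : (besselOpPoly j).natDegree = j + 1 :=
  natDegree_eq_of_le_of_coeff_ne_zero (natDegree_besselOpPoly_le j)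
    (by rw [coeff_besselOpPoly_succ]; norm_num)

theorem coeff_zero_besselOpPoly (j : ℕ) : (besselOpPoly j).coeff 0 = 0 := by
  induction j with
  | zero => simp [besselOpPoly]
  | succ j ih => simp [besselOpPoly, ih]

theorem mul_PopC_besselOpPoly_add_derivative (j : ℕ) (f : ℝ → ℂ) (t : ℝ) :
    t * PopC (besselOpPoly j + derivative (besselOpPoly j)) (deriv f) t =
      PopC (besselOpPoly (j + 1)) f t + (2 * j + 2) * PopC (besselOpPoly j) f t := by
  rw [← PopC_X_mul, show X * (besselOpPoly j + derivative (besselOpPoly j)) =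
    besselOpPoly (j + 1) + C (2 * (j : ℝ) + 2) * besselOpPoly j by rw [besselOpPoly]; ring,
    PopC_add, PopC_C_mul]
  push_cast
  rfl

theorem PopC_besselOpPoly_zero (f : ℝ → ℂ) (t : ℝ) :
    PopC (besselOpPoly 0) f t = -(t * deriv f t) := by
  simp [PopC, besselOpPoly, Finset.sum_range_succ, iteratedDeriv_one]

section CosineToBessel

variable {f : ℝ → ℂ} {v : ℝ}

theorem integral_mul_cos_eq_integral_PopC_besselOpPoly_zero (hv : v ≠ 0) (hf : ContDiff ℝ 1 f)
    (hint : ∀ ℓ ≤ 1, Integrable fun t : ℝ => (t : ℂ) ^ ℓ * iteratedDeriv ℓ f t) :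
    ∫ t, f t * Real.cos (v * t) = ∫ t, PopC (besselOpPoly 0) f t * besselKernel 0 (t * v) := by
  have hφ (s : ℝ) : HasDerivAt (fun s => s * besselKernel 0 s) (Real.cos s) s := by
    simpa only [mul_besselKernel_zero] using Real.hasDerivAt_sin s
  have h := integral_mul_comp_mul_eq_neg_integral (C := 1) hv
    (fun t => (hf.differentiable one_ne_zero t).hasDerivAt)
    (by simpa using hint 0 (zero_le_one)) (by simpa using hint 1 le_rfl)
    (continuous_besselKernel 0) hφ Real.continuous_cos (abs_besselKernel_le_one 0)
    (fun s => by simpa only [mul_besselKernel_zero] using Real.abs_sin_le_one s)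
    Real.abs_cos_le_one
  simp only [PopC_besselOpPoly_zero, neg_mul, integral_neg, mul_comm v]
  exact h

theorem integral_PopC_besselOpPoly_mul_besselKernel_succ {j : ℕ} (hv : v ≠ 0)
    (hf : ContDiff ℝ (j + 2 : ℕ) f)
    (hint : ∀ ℓ ≤ j + 2, Integrable fun t : ℝ => (t : ℂ) ^ ℓ * iteratedDeriv ℓ f t) :
    ∫ t, PopC (besselOpPoly j) f t * besselKernel j (t * v) =
      ∫ t, PopC (besselOpPoly (j + 1)) f t * besselKernel (j + 1) (t * v) := by
  set Q := besselOpPoly j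
  have hQ : Q.natDegree = j + 1 := natDegree_besselOpPoly j
  have hS := integrable_PopC hint (P := Q) (by omega)
  have hS' := integrable_PopC hint (P := besselOpPoly (j + 1)) (by rw [natDegree_besselOpPoly])
  have hone_le : (1 : ℝ) ≤ 2 * j + 3 := by linarith [j.cast_nonneg (α := ℝ)]
  have h := integral_mul_comp_mul_eq_neg_integral (C := 2 * j + 3) hv
    (fun t => hasDerivAt_PopC hf (by omega)) hS
    ((hS'.add (hS.const_mul _)).congr
      (.of_forall fun t => (mul_PopC_besselOpPoly_add_derivative j f t).symm))
    (continuous_besselKernel (j + 1)) (hasDerivAt_mul_besselKernel_succ j) (by fun_prop)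
    (fun s => (abs_besselKernel_le_one _ s).trans hone_le)
    (fun s => (abs_mul_besselKernel_succ_le_one j s).trans hone_le)
    (fun s => (abs_neg _).trans_le (abs_besselKernel_add_mul_succ_le j s))
  have hB (i : ℕ) {S : ℝ → ℂ} (h : Integrable S) := integrable_mul_ofReal_comp_mul h
    (continuous_besselKernel i) (abs_besselKernel_le_one i) v
  have hL : ∫ t, PopC Q f t * ((-(besselKernel j (t * v) +
        (2 * j + 2) * besselKernel (j + 1) (t * v)) : ℝ) : ℂ) =
      -((∫ t, PopC Q f t * besselKernel j (t * v)) +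
        (2 * j + 2) * ∫ t, PopC Q f t * besselKernel (j + 1) (t * v)) := by
    rw [← integral_const_mul, ← integral_add (hB j hS) ((hB (j + 1) hS).const_mul _),
      ← integral_neg]
    refine integral_congr_ae (.of_forall fun t => ?_)
    push_cast
    ring
  have hR :
      ∫ t : ℝ, (t : ℂ) * PopC (Q + derivative Q) (deriv f) t * besselKernel (j + 1) (t * v) =
      (∫ t, PopC (besselOpPoly (j + 1)) f t * besselKernel (j + 1) (t * v)) +
        (2 * j + 2) * ∫ t, PopC Q f t * besselKernel (j + 1) (t * v) := by
    rw [← integral_const_mul, ← integral_add (hB (j + 1) hS') ((hB (j + 1) hS).const_mul _)]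
    refine integral_congr_ae (.of_forall fun t => ?_)
    simp only [Q, mul_PopC_besselOpPoly_add_derivative]
    ring
  rw [hL, hR] at h
  linear_combination -h

theorem integral_mul_cos_eq_integral_PopC_besselOpPoly (j : ℕ) (hv : v ≠ 0)
    (hf : ContDiff ℝ (j + 1 : ℕ) f)
    (hint : ∀ ℓ ≤ j + 1, Integrable fun t : ℝ => (t : ℂ) ^ ℓ * iteratedDeriv ℓ f t) :
    ∫ t, f t * Real.cos (v * t) = ∫ t, PopC (besselOpPoly j) f t * besselKernel j (t * v) := by
  induction j with
  | zero => exact integral_mul_cos_eq_integral_PopC_besselOpPoly_zero hv (by simpa using hf) hint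
  | succ j ih =>
    rw [ih (hf.of_le (by norm_cast; omega)) fun ℓ hℓ => hint ℓ (by omega)]
    exact integral_PopC_besselOpPoly_mul_besselKernel_succ hv hf hint

end CosineToBessel

theorem stmt_2_general (k : ℕ) :
    ∃ P : Polynomial ℝ, P.natDegree = k + 1 ∧ P.coeff 0 = 0 ∧
      ∀ f : ℝ → ℂ, ContDiff ℝ ((k : ℕ∞) + 1) f →
        (∀ ℓ : ℕ, ℓ ≤ k + 1 →
          Integrable (fun t : ℝ => (t : ℂ) ^ ℓ * iteratedDeriv ℓ f t) ∧
          Tendsto (fun t : ℝ => (t : ℂ) ^ ℓ * iteratedDeriv ℓ f t)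
            (cocompact ℝ) (nhds 0)) →
        ∀ v : ℝ, v ≠ 0 →
          ∫ t : ℝ, f t * (Real.cos (v * t) : ℂ) =
            ∫ t : ℝ, PopC P f t * (Jmod k (t * v) : ℂ) := by
  have hJ : Real.sqrt (2 / Real.pi) * (-1) ^ k ≠ 0 :=
    mul_ne_zero (by positivity) (pow_ne_zero _ (by norm_num))
  set c : ℝ := (Real.sqrt (2 / Real.pi) * (-1) ^ k)⁻¹
  have hc : c ≠ 0 := inv_ne_zero hJ
  refine ⟨C c * besselOpPoly k, by rw [natDegree_C_mul hc, natDegree_besselOpPoly],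
    by rw [coeff_C_mul, coeff_zero_besselOpPoly, mul_zero], fun f hf hyp v hv => ?_⟩
  rw [integral_mul_cos_eq_integral_PopC_besselOpPoly k hv (by exact_mod_cast hf)
    fun ℓ hℓ => (hyp ℓ hℓ).1]
  refine integral_congr_ae ?_
  filter_upwards [compl_mem_ae_iff.2 (measure_singleton (0 : ℝ))] with t ht
  rw [PopC_C_mul, Jmod, besselIter_eq_besselKernel k (mul_ne_zero ht hv)]
  have hc' : (c : ℂ) * ((Real.sqrt (2 / Real.pi) * (-1) ^ k : ℝ) : ℂ) = 1 := by
    rw [← Complex.ofReal_mul, inv_mul_cancel₀ hJ, Complex.ofReal_one]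
  push_cast at hc' ⊢
  linear_combination (-(PopC (besselOpPoly k) f t * besselKernel k (t * v))) * hc'

/-- Lemma 6.2: for every positive integer `k` there is a real polynomial `P` of degree
`k+1` without constant term such that
`∫ f(t) cos(vt) dt = ∫ (P(𝒪)f)(t) 𝒥_{k+1/2}(tv) dt` for all suitable `f` and all `v ≠ 0`. -/
theorem stmt_2 (k : ℕ) (hk : 0 < k) :
    ∃ P : Polynomial ℝ, P.natDegree = k + 1 ∧ P.coeff 0 = 0 ∧
      ∀ f : ℝ → ℂ, ContDiff ℝ ((k : ℕ∞) + 1) f →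
        (∀ ℓ : ℕ, ℓ ≤ k + 1 →
          Integrable (fun t : ℝ => (t : ℂ) ^ ℓ * iteratedDeriv ℓ f t) ∧
          Tendsto (fun t : ℝ => (t : ℂ) ^ ℓ * iteratedDeriv ℓ f t)
            (cocompact ℝ) (nhds 0)) →
        ∀ v : ℝ, v ≠ 0 →
          ∫ t : ℝ, f t * (Real.cos (v * t) : ℂ) =
            ∫ t : ℝ, PopC P f t * (Jmod k (t * v) : ℂ) :=
  stmt_2_general k
end

section
/- Let c > 0, let g_c(t) = c^{-1} e^{-c|t|}, let ω be a smooth even function on ℝ with 0 ≤ ω ≤ 1, supported in [−3/4, 3/4] and equal to 1 on [−1/4, 1/4], and let P be a real polynomial with P(0) = 0. Then sup_{t ≠ 0} |t^{-1} (P(𝒪)(ω g_c))(t)| < ∞. -/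
/-- For a real polynomial `P(x) = Σ aₘ xᵐ` and `f : ℝ → ℝ`, the function
`(P(𝒪)f)(t) = Σ aₘ tᵐ f^{(m)}(t)`, i.e. `xᵐ` is replaced by `𝒪^m = tᵐ Dᵐ`. -/
noncomputable def PopR (P : Polynomial ℝ) (f : ℝ → ℝ) (t : ℝ) : ℝ :=
  ∑ m ∈ Finset.range (P.natDegree + 1),
    P.coeff m * t ^ m * iteratedDeriv m f t

/-- Localized Lemma 6.3 (i): for `g_c(t) = c⁻¹ e^{-c|t|}`, a smooth even cutoff `ω`
(supported in `[-3/4, 3/4]`, equal to `1` on `[-1/4, 1/4]`, with `0 ≤ ω ≤ 1`)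
and a real polynomial `P` without constant term,
`sup_{t ≠ 0} |t⁻¹ (P(𝒪)(ω g_c))(t)| < ∞`. -/
theorem stmt_5 (c : ℝ) (hc : 0 < c)
    (ω : ℝ → ℝ) (hωsmooth : ContDiff ℝ (⊤ : ℕ∞) ω) (hωeven : ∀ t, ω (-t) = ω t)
    (hω0 : ∀ t, 0 ≤ ω t) (hω1 : ∀ t, ω t ≤ 1)
    (hωsupp : ∀ t : ℝ, 3 / 4 < |t| → ω t = 0)
    (hωone : ∀ t : ℝ, |t| ≤ 1 / 4 → ω t = 1)
    (P : Polynomial ℝ) (hP : P.coeff 0 = 0) :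
    ∃ C : ℝ, ∀ t : ℝ, t ≠ 0 →
      |t⁻¹ * PopR P (fun s => ω s * (c⁻¹ * Real.exp (-c * |s|))) t| ≤ C := by
  set f : ℝ → ℝ := fun s => ω s * (c⁻¹ * Real.exp (-c * |s|)) with hfdef
  have hωcs : HasCompactSupport ω := by
    apply HasCompactSupport.intro (isCompact_Icc (a := (-1 : ℝ)) (b := 1))
    intro x hx
    apply hωsupp
    simp only [Set.mem_Icc, not_and_or, not_le] at hx
    rcases hx with h | h
    · rw [abs_of_neg (by linarith)]; linarith
    · rw [abs_of_pos (by linarith)]; linarith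
  have key : ∀ m : ℕ, ∃ B : ℝ, ∀ t : ℝ, t ≠ 0 →
      |t⁻¹ * (P.coeff m * t ^ m * iteratedDeriv m f t)| ≤ B := by
    intro m
    match m with
    | 0 => exact ⟨0, fun t ht => by simp [hP]⟩
    | Nat.succ k =>
      set n := k + 1 with hn
      set hpos : ℝ → ℝ := fun s => ω s * (c⁻¹ * Real.exp (-c * s)) with hposdef
      set hneg : ℝ → ℝ := fun s => ω s * (c⁻¹ * Real.exp (c * s)) with hnegdef
      have hpossmooth : ContDiff ℝ (⊤ : ℕ∞) hpos :=
        hωsmooth.mul (contDiff_const.mul ((Real.contDiff_exp).comp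
          (contDiff_const.mul contDiff_id)))
      have hnegsmooth : ContDiff ℝ (⊤ : ℕ∞) hneg :=
        hωsmooth.mul (contDiff_const.mul ((Real.contDiff_exp).comp
          (contDiff_const.mul contDiff_id)))
      have hposcs : HasCompactSupport hpos := hωcs.mul_right
      have hnegcs : HasCompactSupport hneg := hωcs.mul_right
      have hdpcs : HasCompactSupport (iteratedDeriv n hpos) := by
        rw [iteratedDeriv_eq_equiv_comp]
        exact (hposcs.iteratedFDeriv n).comp_left (by simp)
      have hdncs : HasCompactSupport (iteratedDeriv n hneg) := by
        rw [iteratedDeriv_eq_equiv_comp]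
        exact (hnegcs.iteratedFDeriv n).comp_left (by simp)
      obtain ⟨Bp, hBp⟩ := hdpcs.exists_bound_of_continuous
        (hpossmooth.continuous_iteratedDeriv n (by exact_mod_cast le_top))
      obtain ⟨Bn, hBn⟩ := hdncs.exists_bound_of_continuous
        (hnegsmooth.continuous_iteratedDeriv n (by exact_mod_cast le_top))
      set M : ℝ := max Bp (max Bn 0) with hM
      have hM0 : 0 ≤ M := (le_max_right Bn 0).trans (le_max_right Bp _)
      refine ⟨|P.coeff n| * M, fun t ht => ?_⟩
      have habs : |t⁻¹ * (P.coeff n * t ^ n * iteratedDeriv n f t)|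
          = |P.coeff n| * (|t| ^ k * |iteratedDeriv n f t|) := by
        have h1 : t⁻¹ * (P.coeff n * t ^ n * iteratedDeriv n f t)
            = P.coeff n * (t ^ k * iteratedDeriv n f t) := by
          field_simp [hn]; ring
        rw [h1, abs_mul, abs_mul, abs_pow]
      rw [habs]
      have hfinal : |t| ^ k * |iteratedDeriv n f t| ≤ M := by
        by_cases hbig : 3 / 4 < |t|
        · -- f vanishes in a neighborhood of t
          have hev : f =ᶠ[nhds t] (fun _ => (0 : ℝ)) := by
            have hopen : IsOpen {s : ℝ | 3 / 4 < |s|} :=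
              isOpen_lt continuous_const continuous_abs
            filter_upwards [hopen.mem_nhds hbig] with s hs
            simp only [hfdef]
            rw [hωsupp s hs, zero_mul]
          have : iteratedDeriv n f t = iteratedDeriv n (fun _ => (0 : ℝ)) t :=
            hev.iteratedDeriv_eq n
          rw [this]
          have hz : iteratedDeriv n (fun _ : ℝ => (0 : ℝ)) t = 0 := by
            rw [iteratedDeriv_eq_iteratedFDeriv, iteratedFDeriv_zero_fun]
            simp
          rw [hz]
          simpa using hM0
        · push_neg at hbig
          have htle1 : |t| ≤ 1 := hbig.trans (by norm_num)
          have hpowle : |t| ^ k ≤ 1 := pow_le_one₀ (abs_nonneg t) htle1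
          have hDle : |iteratedDeriv n f t| ≤ M := by
            rcases lt_or_gt_of_ne ht with hneg' | hpos'
            · -- t < 0, f = hneg near t
              have hev : f =ᶠ[nhds t] hneg := by
                filter_upwards [(isOpen_Iio (a := (0:ℝ))).mem_nhds hneg'] with s hs
                simp only [hfdef, hnegdef]
                rw [abs_of_neg hs]
                ring_nf
              rw [hev.iteratedDeriv_eq n]
              exact le_trans (by simpa using hBn t)
                (le_trans (le_max_left _ _) (le_max_right _ _))
            · have hev : f =ᶠ[nhds t] hpos := by
                filter_upwards [(isOpen_Ioi (a := (0:ℝ))).mem_nhds hpos'] with s hs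
                simp only [hfdef, hposdef]
                rw [abs_of_pos hs]
              rw [hev.iteratedDeriv_eq n]
              exact le_trans (by simpa using hBp t) (le_max_left _ _)
          calc |t| ^ k * |iteratedDeriv n f t| ≤ 1 * M :=
                mul_le_mul hpowle hDle (abs_nonneg _) one_pos.le
            _ = M := one_mul M
      exact mul_le_mul_of_nonneg_left hfinal (abs_nonneg _)
  choose B hB using key
  refine ⟨∑ m ∈ Finset.range (P.natDegree + 1), B m, fun t ht => ?_⟩
  unfold PopR
  rw [Finset.mul_sum]
  calc |∑ m ∈ Finset.range (P.natDegree + 1),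
          t⁻¹ * (P.coeff m * t ^ m * iteratedDeriv m f t)|
      ≤ ∑ m ∈ Finset.range (P.natDegree + 1),
          |t⁻¹ * (P.coeff m * t ^ m * iteratedDeriv m f t)| :=
        Finset.abs_sum_le_sum_abs _ _
    _ ≤ ∑ m ∈ Finset.range (P.natDegree + 1), B m :=
        Finset.sum_le_sum fun m _ => hB m t ht
end
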